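/- Let n ≥ 1, let ρ = (1/n)·I be the maximally mixed n×n state, let A, B be n×n self-adjoint complex matrices, and let q ∈ ℝ with |q| < 1. Then (1/(1−|q|)²)·|Tr[ρ[A₀,B₀]_{|q|}]|² ≤ V_ρ(A)·V_ρ(B), and this inequality is equivalent to |Tr[A₀B₀]|² ≤ Tr[A₀²]·Tr[B₀²] in the sense that (1/(1−|q|)²)·|Tr[ρ[A₀,B₀]_{|q|}]|² = |Tr[A₀B₀]/n|². -/

import Mathlib

open Matrix ComplexOrder

/-- `A₀ = A - Tr[ρA]·I`, the centered operator. -/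
noncomputable def shift {n : ℕ} (ρ A : Matrix (Fin n) (Fin n) ℂ) : Matrix (Fin n) (Fin n) ℂ :=
  A - (ρ * A).trace • (1 : Matrix (Fin n) (Fin n) ℂ)

/-- `V_ρ(A) = Tr[ρA²] - (Tr[ρA])²` (a real number for self-adjoint `A` and density `ρ`). -/
noncomputable def variance {n : ℕ} (ρ A : Matrix (Fin n) (Fin n) ℂ) : ℝ :=
  ((ρ * (A * A)).trace - ((ρ * A).trace) ^ 2).re

/-- the q-commutator `[A,B]_q = AB - q·BA`. -/
noncomputable def qComm {n : ℕ} (q : ℝ) (A B : Matrix (Fin n) (Fin n) ℂ) :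
    Matrix (Fin n) (Fin n) ℂ :=
  A * B - (q : ℂ) • (B * A)

/-- the q-anti-commutator `{A,B}_q = AB + q·BA`. -/
noncomputable def qAnti {n : ℕ} (q : ℝ) (A B : Matrix (Fin n) (Fin n) ℂ) :
    Matrix (Fin n) (Fin n) ℂ :=
  A * B + (q : ℂ) • (B * A)

/-!
For `ρ = I/n` every expectation `Tr[ρX]` is the normalized trace `Tr[X]/n`. By cyclicity of the
trace, `Tr[[A₀,B₀]_q] = (1 - q)·Tr[A₀B₀]`, so the factor `1/(1-|q|)²` cancels exactly, and
`V_ρ(A) = Tr[A₀²]/n`. The inequality is then Cauchy–Schwarz for the Hilbert–Schmidt inner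
product `⟨X, Y⟩ = Tr[Xᴴ Y]`.
-/

theorem norm_trace_conjTranspose_mul_sq_le {𝕜 ι : Type*} [RCLike 𝕜] [Fintype ι] [DecidableEq ι]
    (X Y : Matrix ι ι 𝕜) :
    ‖(Xᴴ * Y).trace‖ ^ 2 ≤ RCLike.re (Xᴴ * X).trace * RCLike.re (Yᴴ * Y).trace := by
  let _ := (1 : Matrix ι ι 𝕜).toMatrixSeminormedAddCommGroup PosSemidef.one
  let _ := (1 : Matrix ι ι 𝕜).toMatrixInnerProductSpace PosSemidef.one
  have hinner (U V : Matrix ι ι 𝕜) : (inner 𝕜 U V : 𝕜) = (Uᴴ * V).trace := by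
    rw [trace_mul_comm]; exact congrArg trace (congrArg (· * Uᴴ) (mul_one V))
  have key := inner_mul_inner_self_le (𝕜 := 𝕜) X Y
  rwa [norm_inner_symm Y X, ← sq, hinner, hinner, hinner] at key

section

variable {n : ℕ}

theorem trace_qComm (q : ℝ) (X Y : Matrix (Fin n) (Fin n) ℂ) :
    (qComm q X Y).trace = (1 - q) * (X * Y).trace := by
  rw [qComm, trace_sub, trace_smul, trace_mul_comm Y X, smul_eq_mul]
  ring

theorem isHermitian_shift {ρ A : Matrix (Fin n) (Fin n) ℂ} (hρ : ρ.IsHermitian)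
    (hA : A.IsHermitian) : (shift ρ A).IsHermitian := by
  have hreal : star (ρ * A).trace = (ρ * A).trace := by
    rw [← trace_conjTranspose, conjTranspose_mul, hρ.eq, hA.eq, trace_mul_comm]
  rw [IsHermitian, shift, conjTranspose_sub, conjTranspose_smul, conjTranspose_one, hA.eq, hreal]

theorem variance_eq_re_trace_mul_shift_mul_shift {ρ A : Matrix (Fin n) (Fin n) ℂ}
    (hρ : ρ.trace = 1) : variance ρ A = (ρ * (shift ρ A * shift ρ A)).trace.re := by
  simp only [variance, shift, sub_mul, mul_sub, Matrix.smul_mul, Matrix.mul_smul, Matrix.one_mul,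
    Matrix.mul_one, trace_sub, trace_smul, hρ, smul_eq_mul]
  ring_nf

theorem trace_inv_natCast_smul_one_mul (M : Matrix (Fin n) (Fin n) ℂ) :
    (((n : ℂ))⁻¹ • (1 : Matrix (Fin n) (Fin n) ℂ) * M).trace = M.trace / n := by
  rw [Matrix.smul_mul, Matrix.one_mul, trace_smul, smul_eq_mul, inv_mul_eq_div]

theorem trace_inv_natCast_smul_one [NeZero n] :
    (((n : ℂ))⁻¹ • (1 : Matrix (Fin n) (Fin n) ℂ)).trace = 1 := by
  simp

theorem isHermitian_inv_natCast_smul_one :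
    (((n : ℂ))⁻¹ • (1 : Matrix (Fin n) (Fin n) ℂ)).IsHermitian := by
  simp [IsHermitian]

end

/-- For the maximally mixed state `ρ = (1/n)·I` and `|q| < 1`:
`(1/(1−|q|)²)·|Tr[ρ[A₀,B₀]_{|q|}]|² ≤ V_ρ(A)·V_ρ(B)`, and moreover
`(1/(1−|q|)²)·|Tr[ρ[A₀,B₀]_{|q|}]|² = |Tr[A₀B₀]/n|²`. -/
theorem maximally_mixed_uncertainty {n : ℕ}
    (ρ A B : Matrix (Fin (n + 1)) (Fin (n + 1)) ℂ)
    (hρ : ρ = ((n + 1 : ℂ))⁻¹ • (1 : Matrix (Fin (n + 1)) (Fin (n + 1)) ℂ))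
    (hA : A.IsHermitian) (hB : B.IsHermitian) (q : ℝ) (hq : |q| < 1) :
    (1 / (1 - |q|) ^ 2) *
        ‖(ρ * qComm |q| (shift ρ A) (shift ρ B)).trace‖ ^ 2 ≤
      variance ρ A * variance ρ B ∧
    (1 / (1 - |q|) ^ 2) *
        ‖(ρ * qComm |q| (shift ρ A) (shift ρ B)).trace‖ ^ 2 =
      ‖(shift ρ A * shift ρ B).trace / (n + 1 : ℂ)‖ ^ 2 := by
  rw [← Nat.cast_add_one] at hρ ⊢
  have htrace (M : Matrix (Fin (n + 1)) (Fin (n + 1)) ℂ) :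
      (ρ * M).trace = M.trace / (n + 1 : ℕ) :=
    hρ ▸ trace_inv_natCast_smul_one_mul M
  have hρ₁ : ρ.trace = 1 := hρ ▸ trace_inv_natCast_smul_one
  have hρH : ρ.IsHermitian := hρ ▸ isHermitian_inv_natCast_smul_one
  set A₀ := shift ρ A
  set B₀ := shift ρ B
  have heq : 1 / (1 - |q|) ^ 2 * ‖(ρ * qComm |q| A₀ B₀).trace‖ ^ 2 =
      ‖(A₀ * B₀).trace / (n + 1 : ℕ)‖ ^ 2 := by
    have hq₁ : 0 < 1 - |q| := by linarith
    rw [htrace, trace_qComm, mul_div_assoc, norm_mul, ← Complex.ofReal_one, ← Complex.ofReal_sub,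
      Complex.norm_real, Real.norm_of_nonneg hq₁.le]
    field_simp
  refine ⟨?_, heq⟩
  rw [heq, variance_eq_re_trace_mul_shift_mul_shift hρ₁,
    variance_eq_re_trace_mul_shift_mul_shift hρ₁, htrace, htrace, norm_div, Complex.norm_natCast,
    Complex.div_natCast_re, Complex.div_natCast_re, div_pow, div_mul_div_comm, ← sq ((n + 1 : ℕ) : ℝ)]
  gcongr
  have hCS := norm_trace_conjTranspose_mul_sq_le A₀ B₀
  rwa [(isHermitian_shift hρH hA).eq, (isHermitian_shift hρH hB).eq] at hCS
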